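/- arXiv:2106.15131 — 2 statements merged into one kernel-verified Lean document; each statement's English description precedes it below -/
import Mathlib

section
/- Let Φ be an N-function with index s ≥ 1. Then Φ(t)/t ≤ Φ'(t) for every t > 0, and Φ'(t) ≤ (1+s)·( Φ(1)^{s/(1+s)}·Φ(t)^{1/(1+s)} + Φ(1)^{1/(1+s)}·Φ(t)^{s/(1+s)} ) for every t ≥ 0. -/
/-!
Integrating the index condition: `t Φ'(t) - (1 + 1/s) Φ(t)` and `(1 + s) Φ(t) - t Φ'(t)` have
nonnegative derivative on `(0, ∞)` and tend to `0` at `0⁺`, so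
`(1 + 1/s) Φ(t) ≤ t Φ'(t) ≤ (1 + s) Φ(t)`. Hence `Φ(t) / t^(1+1/s)` increases and
`Φ(t) / t^(1+s)` decreases, giving `Φ(t) ≤ Φ(1) t^(1+s)` for `t ≥ 1` and
`Φ(t) ≤ Φ(1) t^(1+1/s)` for `t ≤ 1`. Splitting `Φ(t) = Φ(t)^(1/(1+s)) Φ(t)^(s/(1+s))` and taking
the appropriate root bounds `Φ(t)/t` by one of the two terms, and `Φ'(t) ≤ (1 + s) Φ(t)/t`.
The first inequality is the slope bound for the convex `Φ` with `Φ(0) = 0`.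
-/

open Set Filter Topology

structure IsNFunction (Φ : ℝ → ℝ) (s : ℝ) : Prop where
  s_ge_one : 1 ≤ s
  nonneg : ∀ t, 0 ≤ t → 0 ≤ Φ t
  zero : Φ 0 = 0
  strictMonoOn : StrictMonoOn Φ (Ici 0)
  convexOn : ConvexOn ℝ (Ici 0) Φ
  tendsto_zero : Tendsto (fun t => Φ t / t) (nhdsWithin 0 (Ioi 0)) (nhds 0)
  tendsto_atTop : Tendsto (fun t => Φ t / t) atTop atTop
  contDiffOn_one : ContDiffOn ℝ 1 Φ (Ici 0)
  contDiffOn_two : ContDiffOn ℝ 2 Φ (Ioi 0)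
  deriv_pos : ∀ t, 0 < t → 0 < deriv Φ t
  index_lower : ∀ t, 0 < t → (1 / s) * deriv Φ t ≤ t * deriv (deriv Φ) t
  index_upper : ∀ t, 0 < t → t * deriv (deriv Φ) t ≤ s * deriv Φ t

lemma le_of_tendsto_nhdsGT_of_hasDerivAt_nonneg {g g' : ℝ → ℝ} {a l t : ℝ}
    (hg : ∀ x, a < x → HasDerivAt g (g' x) x) (hg' : ∀ x, a < x → 0 ≤ g' x)
    (hl : Tendsto g (𝓝[>] a) (𝓝 l)) (ht : a < t) : l ≤ g t := by
  have hmono : MonotoneOn g (Ioi a) :=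
    monotoneOn_of_hasDerivWithinAt_nonneg (convex_Ioi a)
      (fun x hx => (hg x hx).continuousAt.continuousWithinAt)
      (fun x hx => (hg x (by simpa using hx)).hasDerivWithinAt)
      (fun x hx => hg' x (by simpa using hx))
  refine le_of_tendsto hl ?_
  filter_upwards [Ioc_mem_nhdsGT ht] with x hx
  exact hmono hx.1 (mem_Ioi.2 ht) hx.2

lemma monotoneOn_div_rpow_of_mul_le_mul_deriv {f f' : ℝ → ℝ} {c : ℝ}
    (hf : ∀ x, 0 < x → HasDerivAt f (f' x) x) (hc : ∀ x, 0 < x → c * f x ≤ x * f' x) :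
    MonotoneOn (fun x => f x / x ^ c) (Ioi 0) := by
  have hderiv : ∀ x, 0 < x → HasDerivAt (fun x => f x / x ^ c)
      ((f' x * x ^ c - f x * (c * x ^ (c - 1))) / (x ^ c) ^ 2) x := fun x hx =>
    (hf x hx).div (Real.hasDerivAt_rpow_const (Or.inl hx.ne')) (by positivity)
  refine monotoneOn_of_hasDerivWithinAt_nonneg (convex_Ioi 0)
    (fun x hx => (hderiv x hx).continuousAt.continuousWithinAt)
    (fun x hx => (hderiv x (by simpa using hx)).hasDerivWithinAt) (fun x hx => ?_)
  rw [interior_Ioi, mem_Ioi] at hx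
  have hsplit : x ^ c = x * x ^ (c - 1) := by
    rw [Real.rpow_sub_one hx.ne', mul_div_cancel₀ _ hx.ne']
  have hnum : 0 ≤ x ^ (c - 1) * (x * f' x - c * f x) :=
    mul_nonneg (by positivity) (sub_nonneg.2 (hc x hx))
  apply div_nonneg _ (by positivity)
  rw [hsplit]
  linarith

lemma antitoneOn_div_rpow_of_mul_deriv_le_mul {f f' : ℝ → ℝ} {c : ℝ}
    (hf : ∀ x, 0 < x → HasDerivAt f (f' x) x) (hc : ∀ x, 0 < x → x * f' x ≤ c * f x) :
    AntitoneOn (fun x => f x / x ^ c) (Ioi 0) := by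
  have := (monotoneOn_div_rpow_of_mul_le_mul_deriv (f := fun x => -f x) (fun x hx => (hf x hx).neg)
    (fun x hx => by linarith [hc x hx])).neg
  simpa [neg_div] using this

lemma div_le_rpow_mul_rpow_of_le_mul_rpow {a b t p : ℝ} (ha : 0 ≤ a) (hb : 0 ≤ b) (ht : 0 < t)
    (hp : 0 < p) (h : a ≤ b * t ^ p) : a / t ≤ b ^ p⁻¹ * a ^ (1 - p⁻¹) := by
  have hroot : a ^ p⁻¹ ≤ b ^ p⁻¹ * t := by
    calc a ^ p⁻¹ ≤ (b * t ^ p) ^ p⁻¹ := by gcongr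
      _ = b ^ p⁻¹ * t := by
        rw [Real.mul_rpow hb (by positivity), ← Real.rpow_mul ht.le, mul_inv_cancel₀ hp.ne',
          Real.rpow_one]
  rw [div_le_iff₀ ht]
  calc a = a ^ p⁻¹ * a ^ (1 - p⁻¹) := by
        rw [← Real.rpow_add' ha (by simp), add_sub_cancel, Real.rpow_one]
    _ ≤ b ^ p⁻¹ * t * a ^ (1 - p⁻¹) := by gcongr
    _ = b ^ p⁻¹ * a ^ (1 - p⁻¹) * t := by ring

namespace IsNFunction

variable {Φ : ℝ → ℝ} {s : ℝ}

lemma differentiableAt (hΦ : IsNFunction Φ s) {t : ℝ} (ht : 0 < t) : DifferentiableAt ℝ Φ t :=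
  (hΦ.contDiffOn_two.differentiableOn two_ne_zero).differentiableAt (Ioi_mem_nhds ht)

lemma hasDerivAt_deriv (hΦ : IsNFunction Φ s) {t : ℝ} (ht : 0 < t) :
    HasDerivAt (deriv Φ) (deriv (deriv Φ) t) t := by
  have h1 : ContDiffOn ℝ 1 (deriv Φ) (Ioi 0) :=
    hΦ.contDiffOn_two.deriv_of_isOpen isOpen_Ioi (by norm_num)
  exact ((h1.differentiableOn one_ne_zero).differentiableAt (Ioi_mem_nhds ht)).hasDerivAt

lemma tendsto_nhdsGT_zero (hΦ : IsNFunction Φ s) : Tendsto Φ (𝓝[>] 0) (𝓝 0) := by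
  have := (hΦ.contDiffOn_one.continuousOn 0 self_mem_Ici).tendsto
  rw [hΦ.zero] at this
  exact this.mono_left (nhdsWithin_mono 0 Ioi_subset_Ici_self)

lemma tendsto_mul_deriv_nhdsGT_zero (hΦ : IsNFunction Φ s) :
    Tendsto (fun x => x * deriv Φ x) (𝓝[>] 0) (𝓝 0) := by
  have hmono : MonotoneOn (deriv Φ) (Ioi 0) :=
    (hΦ.convexOn.subset Ioi_subset_Ici_self (convex_Ioi 0)).monotoneOn_deriv
      fun x hx => hΦ.differentiableAt hx
  have hupper : Tendsto (fun x : ℝ => x * deriv Φ 1) (𝓝[>] 0) (𝓝 0) := by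
    simpa using ((continuous_mul_const (deriv Φ 1)).tendsto 0).mono_left nhdsWithin_le_nhds
  refine tendsto_of_tendsto_of_tendsto_of_le_of_le' tendsto_const_nhds hupper ?_ ?_
  · filter_upwards [self_mem_nhdsWithin] with x hx
    exact mul_nonneg (le_of_lt hx) (hΦ.deriv_pos x hx).le
  · filter_upwards [Ioo_mem_nhdsGT one_pos] with x hx
    exact mul_le_mul_of_nonneg_left (hmono hx.1 (mem_Ioi.2 one_pos) hx.2.le) hx.1.le

/-- `Φ` need not be differentiable at `0`, its values on `(-∞, 0)` being arbitrary; then `deriv`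
is `0` by convention. -/
lemma deriv_zero (hΦ : IsNFunction Φ s) : deriv Φ 0 = 0 := by
  by_cases h : DifferentiableAt ℝ Φ 0
  · have hslope := (hasDerivWithinAt_iff_tendsto_slope' self_notMem_Ioi).1
      (h.hasDerivAt.hasDerivWithinAt (s := Ioi 0))
    refine tendsto_nhds_unique hslope (hΦ.tendsto_zero.congr fun x => ?_)
    simp [slope_def_field, hΦ.zero]
  · exact deriv_zero_of_not_differentiableAt h

lemma hasDerivAt_mul_deriv_sub (hΦ : IsNFunction Φ s) (c : ℝ) {x : ℝ} (hx : 0 < x) :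
    HasDerivAt (fun y => y * deriv Φ y - c * Φ y)
      (x * deriv (deriv Φ) x - (c - 1) * deriv Φ x) x := by
  refine (((hasDerivAt_id' x).mul (hΦ.hasDerivAt_deriv hx)).sub
    ((hΦ.differentiableAt hx).hasDerivAt.const_mul c)).congr_deriv ?_
  ring

lemma tendsto_mul_deriv_sub (hΦ : IsNFunction Φ s) (c : ℝ) :
    Tendsto (fun y => y * deriv Φ y - c * Φ y) (𝓝[>] 0) (𝓝 0) := by
  simpa using hΦ.tendsto_mul_deriv_nhdsGT_zero.sub (hΦ.tendsto_nhdsGT_zero.const_mul c)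

lemma one_add_inv_mul_le_mul_deriv (hΦ : IsNFunction Φ s) {t : ℝ} (ht : 0 < t) :
    (1 + s⁻¹) * Φ t ≤ t * deriv Φ t := by
  have := le_of_tendsto_nhdsGT_of_hasDerivAt_nonneg
    (fun x hx => hΦ.hasDerivAt_mul_deriv_sub (1 + s⁻¹) hx)
    (fun x hx => by
      rw [add_sub_cancel_left, ← one_div]
      linarith [hΦ.index_lower x hx]) (hΦ.tendsto_mul_deriv_sub _) ht
  linarith

lemma mul_deriv_le_one_add_mul (hΦ : IsNFunction Φ s) {t : ℝ} (ht : 0 < t) :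
    t * deriv Φ t ≤ (1 + s) * Φ t := by
  have hlim := (hΦ.tendsto_mul_deriv_sub (1 + s)).neg
  rw [neg_zero] at hlim
  have := le_of_tendsto_nhdsGT_of_hasDerivAt_nonneg
    (fun x hx => (hΦ.hasDerivAt_mul_deriv_sub (1 + s) hx).neg)
    (fun x hx => by linarith [hΦ.index_upper x hx]) hlim ht
  linarith [show (0 : ℝ) ≤ -(t * deriv Φ t - (1 + s) * Φ t) from this]

lemma le_mul_rpow_of_one_le (hΦ : IsNFunction Φ s) {t : ℝ} (ht : 1 ≤ t) :
    Φ t ≤ Φ 1 * t ^ (1 + s) := by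
  have hanti := antitoneOn_div_rpow_of_mul_deriv_le_mul
    (fun x hx => (hΦ.differentiableAt hx).hasDerivAt) fun x hx => hΦ.mul_deriv_le_one_add_mul hx
  have := hanti (mem_Ioi.2 one_pos) (mem_Ioi.2 (one_pos.trans_le ht)) ht
  simp only [Real.one_rpow, div_one] at this
  rwa [div_le_iff₀ (by positivity)] at this

lemma le_mul_rpow_of_le_one (hΦ : IsNFunction Φ s) {t : ℝ} (ht : 0 < t) (ht₁ : t ≤ 1) :
    Φ t ≤ Φ 1 * t ^ (1 + s⁻¹) := by
  have hmono := monotoneOn_div_rpow_of_mul_le_mul_deriv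
    (fun x hx => (hΦ.differentiableAt hx).hasDerivAt) fun x hx => hΦ.one_add_inv_mul_le_mul_deriv hx
  have := hmono (mem_Ioi.2 ht) (mem_Ioi.2 one_pos) ht₁
  simp only [Real.one_rpow, div_one] at this
  rwa [div_le_iff₀ (by positivity)] at this

lemma div_le_add_rpow_mul_rpow (hΦ : IsNFunction Φ s) {t : ℝ} (ht : 0 < t) :
    Φ t / t ≤ Φ 1 ^ (s / (1 + s)) * Φ t ^ (1 / (1 + s))
      + Φ 1 ^ (1 / (1 + s)) * Φ t ^ (s / (1 + s)) := by
  have hs : 0 < s := one_pos.trans_le hΦ.s_ge_one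
  have hΦ₁ := hΦ.nonneg 1 zero_le_one
  have hΦt := hΦ.nonneg t ht.le
  rcases le_total 1 t with ht₁ | ht₁
  · have h := div_le_rpow_mul_rpow_of_le_mul_rpow hΦt hΦ₁ ht (by positivity)
      (hΦ.le_mul_rpow_of_one_le ht₁)
    rw [show (1 + s)⁻¹ = 1 / (1 + s) by ring,
      show 1 - 1 / (1 + s) = s / (1 + s) by field_simp; ring] at h
    exact le_add_of_nonneg_of_le (by positivity) h
  · have h := div_le_rpow_mul_rpow_of_le_mul_rpow hΦt hΦ₁ ht (by positivity)
      (hΦ.le_mul_rpow_of_le_one ht ht₁)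
    rw [show (1 + s⁻¹)⁻¹ = s / (1 + s) by field_simp; ring,
      show 1 - s / (1 + s) = 1 / (1 + s) by field_simp; ring] at h
    exact le_add_of_le_of_nonneg h (by positivity)

end IsNFunction

/-- For an N-function `Φ` with index `s ≥ 1`, `Φ(t)/t ≤ Φ'(t)` for `t > 0`,
and `Φ'(t) ≤ (1+s)·(Φ(1)^{s/(1+s)}·Φ(t)^{1/(1+s)} + Φ(1)^{1/(1+s)}·Φ(t)^{s/(1+s)})` for
`t ≥ 0`. -/
theorem statement5 (Φ : ℝ → ℝ) (s : ℝ) (hΦ : IsNFunction Φ s) :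
    (∀ t : ℝ, 0 < t → Φ t / t ≤ deriv Φ t) ∧
    (∀ t : ℝ, 0 ≤ t →
      deriv Φ t ≤ (1 + s) * (Φ 1 ^ (s / (1 + s)) * Φ t ^ (1 / (1 + s))
        + Φ 1 ^ (1 / (1 + s)) * Φ t ^ (s / (1 + s)))) := by
  have hs : 0 < s := one_pos.trans_le hΦ.s_ge_one
  refine ⟨fun t ht => ?_, fun t ht => ?_⟩
  · simpa [slope_def_field, hΦ.zero] using
      hΦ.convexOn.slope_le_deriv self_mem_Ici ht.le ht (hΦ.differentiableAt ht)
  rcases ht.eq_or_lt with rfl | ht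
  · rw [hΦ.deriv_zero, hΦ.zero, Real.zero_rpow (by positivity), Real.zero_rpow (by positivity)]
    simp
  calc deriv Φ t ≤ (1 + s) * (Φ t / t) := by
        rw [mul_div_assoc', le_div_iff₀ ht]
        linarith [hΦ.mul_deriv_le_one_add_mul ht]
    _ ≤ _ := by
        gcongr
        exact hΦ.div_le_add_rpow_mul_rpow ht
end

section
/- Let Φ be an N-function with index s ≥ 1. Then the function t ↦ Φ(t^{1/(s+1)}) is concave on [0,∞). -/
/-!
With `u = t ^ (1 / (s + 1))`, the derivative of `Φ (t ^ (1 / (s + 1)))` is `Φ' u / ((s + 1) u ^ s)`.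
Since `u` increases with `t`, concavity reduces to `Φ' u / u ^ s` being nonincreasing on `(0, ∞)`,
which is exactly the upper index inequality `u Φ'' u ≤ s Φ' u`.
-/

open Real Set Filter MeasureTheory
open scoped RealInnerProductSpace

theorem antitoneOn_div_rpow_of_mul_deriv_le {f : ℝ → ℝ} {s : ℝ}
    (hf : DifferentiableOn ℝ f (Ioi 0)) (h : ∀ t, 0 < t → t * deriv f t ≤ s * f t) :
    AntitoneOn (fun t => f t / t ^ s) (Ioi 0) := by
  have hpow : ∀ t : ℝ, 0 < t → HasDerivAt (fun t => t ^ s) (s * t ^ (s - 1)) t :=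
    fun t ht => hasDerivAt_rpow_const (Or.inl ht.ne')
  have hquot : ∀ t : ℝ, 0 < t → HasDerivAt (fun t => f t / t ^ s)
      ((deriv f t * t ^ s - f t * (s * t ^ (s - 1))) / (t ^ s) ^ 2) t := fun t ht =>
    ((hf.differentiableAt (Ioi_mem_nhds ht)).hasDerivAt.div (hpow t ht)
      (rpow_pos_of_pos ht s).ne')
  apply antitoneOn_of_deriv_nonpos (convex_Ioi 0)
  · exact fun t ht => (hquot t ht).continuousAt.continuousWithinAt
  · rw [interior_Ioi]
    exact fun t ht => (hquot t ht).differentiableAt.differentiableWithinAt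
  · rw [interior_Ioi]
    intro t ht
    have hsplit : t ^ s = t ^ (s - 1) * t := by rw [← rpow_add_one ht.ne', sub_add_cancel]
    have hnum : deriv f t * t ^ s - f t * (s * t ^ (s - 1))
        = t ^ (s - 1) * (t * deriv f t - s * f t) := by rw [hsplit]; ring
    rw [(hquot t ht).deriv, hnum]
    exact div_nonpos_of_nonpos_of_nonneg
      (mul_nonpos_of_nonneg_of_nonpos (rpow_nonneg ht.le _) (sub_nonpos.2 (h t ht)))
      (sq_nonneg _)

theorem rpow_one_div_add_one_sub_one {x s : ℝ} (hx : 0 ≤ x) (hs : s + 1 ≠ 0) :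
    x ^ (1 / (s + 1) - 1) = ((x ^ (1 / (s + 1))) ^ s)⁻¹ := by
  rw [← rpow_mul hx, ← rpow_neg hx]
  congr 1
  field_simp
  ring

theorem concaveOn_comp_rpow_one_div_add_one {Φ : ℝ → ℝ} {s : ℝ} (hs : 0 < s + 1)
    (hcont : ContinuousOn Φ (Ici 0)) (hdiff : DifferentiableOn ℝ Φ (Ioi 0))
    (hanti : AntitoneOn (fun u => deriv Φ u / u ^ s) (Ioi 0)) :
    ConcaveOn ℝ (Ici 0) (fun t => Φ (t ^ (1 / (s + 1)))) := by
  set p := 1 / (s + 1)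
  have hp : 0 < p := by positivity
  have hderiv : ∀ x : ℝ, 0 < x →
      HasDerivAt (fun t => Φ (t ^ p)) (deriv Φ (x ^ p) / (x ^ p) ^ s / (s + 1)) x := by
    intro x hx
    have hΦ := (hdiff.differentiableAt (Ioi_mem_nhds (rpow_pos_of_pos hx p))).hasDerivAt
    refine (hΦ.comp x (hasDerivAt_rpow_const (Or.inl hx.ne'))).congr_deriv ?_
    rw [rpow_one_div_add_one_sub_one hx.le hs.ne']
    ring
  apply AntitoneOn.concaveOn_of_deriv (convex_Ici 0)
  · exact hcont.comp (continuousOn_id.rpow_const fun _ _ => Or.inr hp.le)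
      fun x hx => rpow_nonneg hx p
  · rw [interior_Ici]
    exact fun x hx => (hderiv x hx).differentiableAt.differentiableWithinAt
  · rw [interior_Ici]
    intro x hx y hy hxy
    rw [(hderiv x hx).deriv, (hderiv y hy).deriv]
    exact div_le_div_of_nonneg_right
      (hanti (rpow_pos_of_pos hx p) (rpow_pos_of_pos hy p) (rpow_le_rpow hx.le hxy hp.le)) hs.le

theorem IsNFunction.differentiableOn_deriv {Φ : ℝ → ℝ} {s : ℝ} (hΦ : IsNFunction Φ s) :
    DifferentiableOn ℝ (deriv Φ) (Ioi 0) :=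
  (hΦ.contDiffOn_two.deriv_of_isOpen isOpen_Ioi (m := 1) (by norm_num)).differentiableOn
    (by norm_num)

/-- If `Φ` is an N-function with index `s ≥ 1`, then `t ↦ Φ(t^{1/(s+1)})`
is concave on `[0,∞)`. -/
theorem statement11 (Φ : ℝ → ℝ) (s : ℝ) (hΦ : IsNFunction Φ s) :
    ConcaveOn ℝ (Ici 0) (fun t => Φ (t ^ (1 / (s + 1)))) :=
  concaveOn_comp_rpow_one_div_add_one (by linarith [hΦ.s_ge_one])
    hΦ.contDiffOn_one.continuousOn (hΦ.contDiffOn_two.differentiableOn (by norm_num))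
    (antitoneOn_div_rpow_of_mul_deriv_le hΦ.differentiableOn_deriv hΦ.index_upper)
end
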